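/- arXiv:1405.0127 — 7 statements merged into one kernel-verified Lean document; each statement's English description precedes it below -/
import Mathlib

section
/- Let m ≥ 2 and let Ω be a nonempty open convex subset of ℝ^m with finite Lebesgue measure |Ω| and inradius ρ(Ω). Then Ω is bounded and its diameter satisfies diam(Ω) ≤ 2·m·ω_{m-1}^{-1}·ρ(Ω)^{1-m}·|Ω|. -/
/-!
If the ball `B(x, r)` lies in the convex set `Ω` and `p ∈ Ω`, then `Ω` contains the open cone
with apex `p` over the `(m-1)`-disc of radius `r` through `x` orthogonal to `p - x`. Its volume,
computed slice by slice along the axis, is `ω_{m-1} r^{m-1} |p - x| / m`, so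
`|p - x| ≤ m ω_{m-1}⁻¹ r^{1-m} |Ω|`: `Ω` is bounded, with diameter at most twice this bound.
Letting `r` increase to the inradius gives the estimate.
-/

open MeasureTheory Metric Set Module
open scoped RealInnerProductSpace Pointwise

/-- The inradius of a subset of Euclidean space: the supremum of radii of open balls
contained in the set. -/
noncomputable def inradius {m : ℕ} (A : Set (EuclideanSpace ℝ (Fin m))) : ℝ :=
  sSup {r : ℝ | 0 < r ∧ ∃ x, ball x r ⊆ A}

section Inradius

variable {m : ℕ} {A : Set (EuclideanSpace ℝ (Fin m))}

theorem exists_ball_subset_of_lt_inradius {r : ℝ} (hr : 0 < r) (h : r < inradius A) :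
    ∃ x, ball x r ⊆ A := by
  have hne : {r : ℝ | 0 < r ∧ ∃ x, ball x r ⊆ A}.Nonempty := by
    by_contra hempty
    rw [not_nonempty_iff_eq_empty] at hempty
    rw [inradius, hempty, Real.sSup_empty] at h
    exact h.not_gt hr
  obtain ⟨s, ⟨-, x, hx⟩, hrs⟩ := exists_lt_of_lt_csSup hne h
  exact ⟨x, (ball_subset_ball hrs.le).trans hx⟩

theorem inradius_pos [NeZero m] (hA : IsOpen A) (hne : A.Nonempty)
    (hbdd : Bornology.IsBounded A) : 0 < inradius A := by
  obtain ⟨x, hx⟩ := hne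
  obtain ⟨r, hr, hball⟩ := Metric.isOpen_iff.1 hA x hx
  have hbddAbove : BddAbove {r : ℝ | 0 < r ∧ ∃ x, ball x r ⊆ A} := by
    refine ⟨diam A / 2, ?_⟩
    rintro s ⟨hs, y, hy⟩
    have := diam_mono hy hbdd
    rw [diam_ball_eq y hs.le] at this
    linarith
  exact hr.trans_le (le_csSup hbddAbove ⟨hr, x, hball⟩)

theorem apply_inradius_le_of_forall_ball_subset {g : ℝ → ℝ} {c : ℝ} (hg : Continuous g)
    (hA : 0 < inradius A) (h : ∀ r x, 0 < r → ball x r ⊆ A → g r ≤ c) :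
    g (inradius A) ≤ c := by
  have hIoo : Ioo 0 (inradius A) ⊆ {r | g r ≤ c} := fun r hr =>
    let ⟨x, hx⟩ := exists_ball_subset_of_lt_inradius hr.1 hr.2
    h r x hr.1 hx
  have hcl := (isClosed_le hg continuous_const).closure_subset_iff.2 hIoo
  rw [closure_Ioo hA.ne] at hcl
  exact hcl (right_mem_Icc.2 hA.le)

end Inradius

section Cone

variable {E : Type*} [NormedAddCommGroup E] [InnerProductSpace ℝ E]

/-- For a unit vector `u`, the open cone with apex `h • u` over the open disc of radius `r`
centred at `0` in the hyperplane `uᗮ`. -/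
def openCone (u : E) (r h : ℝ) : Set E :=
  {q | ⟪u, q⟫ ∈ Ioo 0 h ∧ ‖q - ⟪u, q⟫ • u‖ < r * (1 - ⟪u, q⟫ / h)}

theorem isOpen_openCone (u : E) (r h : ℝ) : IsOpen (openCone u r h) := by
  have hc : Continuous fun q : E => ⟪u, q⟫ := continuous_const.inner continuous_id
  exact (isOpen_Ioo.preimage hc).inter (isOpen_lt (f := fun q => ‖q - ⟪u, q⟫ • u‖)
    (g := fun q => r * (1 - ⟪u, q⟫ / h)) (by fun_prop) (by fun_prop))

theorem LinearIsometryEquiv.preimage_openCone {F : Type*} [NormedAddCommGroup F]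
    [InnerProductSpace ℝ F] (L : E ≃ₗᵢ[ℝ] F) (u : E) (r h : ℝ) :
    L ⁻¹' openCone (L u) r h = openCone u r h := by
  ext q
  simp only [openCone, mem_preimage, mem_ofPred_eq, L.inner_map_map, ← map_smul, ← map_sub,
    L.norm_map]

theorem Convex.vadd_openCone_subset {Ω : Set E} (hΩ : Convex ℝ Ω) {x u : E} {r h : ℝ}
    (hball : ball x r ⊆ Ω) (hp : x + h • u ∈ Ω) : x +ᵥ openCone u r h ⊆ Ω := by
  rintro _ ⟨q, ⟨⟨hc₀, hch⟩, hq⟩, rfl⟩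
  set s := ⟪u, q⟫ / h
  have hh : 0 < h := hc₀.trans hch
  have hs₀ : 0 < s := div_pos hc₀ hh
  have hs₁ : 0 < 1 - s := sub_pos.2 ((div_lt_one hh).2 hch)
  have hmem : x + (1 - s)⁻¹ • (q - ⟪u, q⟫ • u) ∈ ball x r := by
    rw [mem_ball, dist_eq_norm, add_sub_cancel_left, norm_smul, Real.norm_eq_abs,
      abs_of_pos (inv_pos.2 hs₁), inv_mul_lt_iff₀ hs₁, mul_comm]
    exact hq
  have hq_eq : x + q = (1 - s) • (x + (1 - s)⁻¹ • (q - ⟪u, q⟫ • u)) + s • (x + h • u) := by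
    rw [smul_add, smul_smul, mul_inv_cancel₀ hs₁.ne', one_smul, smul_add, smul_smul,
      div_mul_cancel₀ _ hh.ne']
    module
  show x + q ∈ Ω
  rw [hq_eq]
  exact hΩ (hball hmem) hp hs₁.le hs₀.le (by ring)

end Cone

namespace EuclideanSpace

def headTail (k : ℕ) (q : EuclideanSpace ℝ (Fin (k + 1))) : ℝ × EuclideanSpace ℝ (Fin k) :=
  (q 0, WithLp.toLp 2 fun j => q j.succ)

theorem measurePreserving_headTail (k : ℕ) : MeasurePreserving (headTail k) :=
  (((MeasurePreserving.id volume).prod (PiLp.volume_preserving_toLp (Fin k))).comp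
    (volume_preserving_piFinSuccAbove (fun _ => ℝ) 0)).comp (PiLp.volume_preserving_ofLp _)

theorem norm_sub_smul_single_zero {k : ℕ} (q : EuclideanSpace ℝ (Fin (k + 1))) :
    ‖q - q 0 • single 0 1‖ = ‖(headTail k q).2‖ := by
  simp only [EuclideanSpace.norm_eq, Fin.sum_univ_succ, headTail]
  simp [Fin.succ_ne_zero]

end EuclideanSpace

theorem MeasureTheory.Measure.prod_setOf_norm_lt {F : Type*} [NormedAddCommGroup F]
    [NormedSpace ℝ F] [FiniteDimensional ℝ F] [MeasurableSpace F] [BorelSpace F] (μ : Measure ℝ)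
    (ν : Measure F) [ν.IsAddHaarMeasure] {s : Set ℝ} (hs : MeasurableSet s) {f : ℝ → ℝ}
    (hf : Measurable f) (hf_pos : ∀ t ∈ s, 0 < f t) :
    μ.prod ν {z | z.1 ∈ s ∧ ‖z.2‖ < f z.1} =
      ∫⁻ t in s, ENNReal.ofReal (f t ^ finrank ℝ F) * ν (ball 0 1) ∂μ := by
  have hmeas : MeasurableSet {z : ℝ × F | z.1 ∈ s ∧ ‖z.2‖ < f z.1} :=
    (measurable_fst hs).inter (measurableSet_lt measurable_snd.norm (hf.comp measurable_fst))
  rw [Measure.prod_apply hmeas, ← lintegral_indicator hs]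
  congr 1 with t
  by_cases ht : t ∈ s
  · have hslice : Prod.mk t ⁻¹' {z : ℝ × F | z.1 ∈ s ∧ ‖z.2‖ < f z.1} = ball 0 (f t) := by
      ext w; simp [ht]
    rw [indicator_of_mem ht, hslice, ν.addHaar_ball_of_pos _ (hf_pos t ht)]
  · have hslice : Prod.mk t ⁻¹' {z : ℝ × F | z.1 ∈ s ∧ ‖z.2‖ < f z.1} = ∅ := by
      ext w; simp [ht]
    rw [indicator_of_notMem ht, hslice, measure_empty]

theorem lintegral_Ioo_ofReal_mul_one_sub_div_pow (k : ℕ) {r h : ℝ} (hr : 0 ≤ r) (hh : 0 < h) :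
    ∫⁻ t in Ioo 0 h, ENNReal.ofReal ((r * (1 - t / h)) ^ k) =
      ENNReal.ofReal (r ^ k * h / (k + 1)) := by
  have hcont : Continuous fun t : ℝ => (r * (1 - t / h)) ^ k := by fun_prop
  rw [← ofReal_integral_eq_lintegral_ofReal
    ((hcont.integrableOn_Icc (a := 0) (b := h)).mono_set Ioo_subset_Icc_self)]
  · rw [← integral_Ioc_eq_integral_Ioo, ← intervalIntegral.integral_of_le hh.le]
    simp only [mul_pow, intervalIntegral.integral_const_mul]
    rw [intervalIntegral.integral_comp_sub_div (fun t => t ^ k) hh.ne', integral_pow,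
      div_self hh.ne', zero_div, sub_zero, sub_self, one_pow, zero_pow k.succ_ne_zero, smul_eq_mul]
    ring_nf
  · filter_upwards [ae_restrict_mem measurableSet_Ioo] with t ht
    have : 0 ≤ 1 - t / h := sub_nonneg.2 ((div_le_one hh).2 ht.2.le)
    positivity

open EuclideanSpace in
theorem volume_openCone_single (k : ℕ) {r h : ℝ} (hr : 0 < r) (hh : 0 < h) :
    volume (openCone (single 0 1 : EuclideanSpace ℝ (Fin (k + 1))) r h) =
      ENNReal.ofReal (r ^ k * h / (k + 1)) * volume (ball (0 : EuclideanSpace ℝ (Fin k)) 1) := by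
  have hcone : openCone (single 0 1 : EuclideanSpace ℝ (Fin (k + 1))) r h =
      headTail k ⁻¹' {z | z.1 ∈ Ioo 0 h ∧ ‖z.2‖ < r * (1 - z.1 / h)} := by
    ext q
    simp only [openCone, mem_preimage, mem_ofPred_eq, inner_single_left, map_one, one_mul,
      norm_sub_smul_single_zero]
    rfl
  have hmeas : MeasurableSet {z : ℝ × EuclideanSpace ℝ (Fin k) |
      z.1 ∈ Ioo 0 h ∧ ‖z.2‖ < r * (1 - z.1 / h)} :=
    (measurable_fst measurableSet_Ioo).inter (measurableSet_lt measurable_snd.norm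
      (((measurable_fst.div_const h).const_sub 1).const_mul r))
  have hpos : ∀ t ∈ Ioo 0 h, 0 < r * (1 - t / h) := fun t ht =>
    mul_pos hr (sub_pos.2 ((div_lt_one hh).2 ht.2))
  rw [hcone, (measurePreserving_headTail k).measure_preimage hmeas.nullMeasurableSet,
    Measure.volume_eq_prod,
    Measure.prod_setOf_norm_lt _ _ measurableSet_Ioo (by fun_prop) hpos, finrank_euclideanSpace_fin,
    lintegral_mul_const _ (by fun_prop), lintegral_Ioo_ofReal_mul_one_sub_div_pow k hr.le hh]

theorem volume_openCone {k : ℕ} {u : EuclideanSpace ℝ (Fin (k + 1))} (hu : ‖u‖ = 1) {r h : ℝ}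
    (hr : 0 < r) (hh : 0 < h) :
    volume (openCone u r h) =
      ENNReal.ofReal (r ^ k * h / (k + 1)) * volume (ball (0 : EuclideanSpace ℝ (Fin k)) 1) := by
  set L := (ℝ ∙ (u - EuclideanSpace.single 0 1))ᗮ.reflection
  have hLu : L u = EuclideanSpace.single 0 1 := Submodule.reflection_sub (by simp [hu])
  rw [← L.preimage_openCone, hLu, L.measurePreserving.measure_preimage
    (isOpen_openCone _ r h).measurableSet.nullMeasurableSet, volume_openCone_single k hr hh]

section ConvexBody

variable {k : ℕ} {Ω : Set (EuclideanSpace ℝ (Fin (k + 1)))} {x : EuclideanSpace ℝ (Fin (k + 1))}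
  {r : ℝ}

theorem Convex.ofReal_mul_volume_ball_le (hΩ : Convex ℝ Ω) (hr : 0 < r) (hball : ball x r ⊆ Ω)
    {p : EuclideanSpace ℝ (Fin (k + 1))} (hp : p ∈ Ω) :
    ENNReal.ofReal (r ^ k * dist p x / (k + 1)) *
      volume (ball (0 : EuclideanSpace ℝ (Fin k)) 1) ≤ volume Ω := by
  rcases eq_or_ne p x with rfl | hpx
  · simp
  set h := dist p x
  have hh : 0 < h := dist_pos.2 hpx
  set u := h⁻¹ • (p - x)
  have hu : ‖u‖ = 1 := by
    rw [norm_smul, Real.norm_of_nonneg (inv_nonneg.2 hh.le), ← dist_eq_norm, inv_mul_cancel₀ hh.ne']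
  have hapex : x + h • u = p := by simp [u, smul_smul, mul_inv_cancel₀ hh.ne']
  calc _ = volume (x +ᵥ openCone u r h) := by rw [measure_vadd, volume_openCone hu hr hh]
    _ ≤ volume Ω := measure_mono (hΩ.vadd_openCone_subset hball (hapex ▸ hp))

theorem Convex.subset_closedBall_of_ball_subset (hΩ : Convex ℝ Ω) (hvol : volume Ω ≠ ⊤)
    (hr : 0 < r) (hball : ball x r ⊆ Ω) :
    Ω ⊆ closedBall x ((k + 1) * (volume (ball (0 : EuclideanSpace ℝ (Fin k)) 1)).toReal⁻¹ *
      (r ^ k)⁻¹ * (volume Ω).toReal) := by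
  intro p hp
  have hω : 0 < (volume (ball (0 : EuclideanSpace ℝ (Fin k)) 1)).toReal :=
    ENNReal.toReal_pos (measure_ball_pos volume 0 one_pos).ne' measure_ball_lt_top.ne
  have hle := ENNReal.toReal_mono hvol (hΩ.ofReal_mul_volume_ball_le hr hball hp)
  rw [ENNReal.toReal_mul, ENNReal.toReal_ofReal (by positivity)] at hle
  rw [mem_closedBall, show ∀ a b c : ℝ, (k + 1) * a⁻¹ * b⁻¹ * c = c / (b * a / (k + 1)) by
    intros; field_simp, le_div_iff₀ (by positivity)]
  exact le_of_eq_of_le (by ring) hle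

theorem Convex.diam_mul_pow_le_of_ball_subset (hΩ : Convex ℝ Ω) (hvol : volume Ω ≠ ⊤)
    (hr : 0 < r) (hball : ball x r ⊆ Ω) :
    diam Ω * r ^ k ≤
      2 * (k + 1) * (volume (ball (0 : EuclideanSpace ℝ (Fin k)) 1)).toReal⁻¹ *
        (volume Ω).toReal := by
  have hdiam := (diam_mono (hΩ.subset_closedBall_of_ball_subset hvol hr hball)
    isBounded_closedBall).trans (diam_closedBall (by positivity))
  calc diam Ω * r ^ k
      ≤ 2 * ((k + 1) * (volume (ball (0 : EuclideanSpace ℝ (Fin k)) 1)).toReal⁻¹ * (r ^ k)⁻¹ *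
        (volume Ω).toReal) * r ^ k := by gcongr
    _ = _ := by field_simp

end ConvexBody

/-- a nonempty open convex set `Ω ⊆ ℝ^m` (`m ≥ 2`) of finite Lebesgue measure
is bounded, and `diam Ω ≤ 2 m ω_{m-1}⁻¹ ρ(Ω)^{1-m} |Ω|`. -/
theorem diam_le_of_convex (m : ℕ) (hm : 2 ≤ m)
    (Ω : Set (EuclideanSpace ℝ (Fin m)))
    (hne : Ω.Nonempty) (hopen : IsOpen Ω) (hconv : Convex ℝ Ω)
    (hvol : volume Ω < ⊤) :
    Bornology.IsBounded Ω ∧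
      diam Ω ≤ 2 * m * ((volume (ball (0 : EuclideanSpace ℝ (Fin (m - 1))) 1)).toReal)⁻¹ *
        (inradius Ω ^ (m - 1))⁻¹ * (volume Ω).toReal := by
  obtain ⟨k, rfl⟩ : ∃ k, m = k + 1 := ⟨m - 1, by omega⟩
  rw [Nat.add_sub_cancel]
  obtain ⟨x₀, hx₀⟩ := hne
  obtain ⟨r₀, hr₀, hball₀⟩ := Metric.isOpen_iff.1 hopen x₀ hx₀
  have hbdd : Bornology.IsBounded Ω :=
    isBounded_closedBall.subset (hconv.subset_closedBall_of_ball_subset hvol.ne hr₀ hball₀)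
  have hρ : 0 < inradius Ω := inradius_pos hopen ⟨x₀, hx₀⟩ hbdd
  have hdiam := apply_inradius_le_of_forall_ball_subset (g := fun r => diam Ω * r ^ k)
    (by fun_prop) hρ fun r x hr hball => hconv.diam_mul_pow_le_of_ball_subset hvol.ne hr hball
  refine ⟨hbdd, ?_⟩
  rw [show ∀ a b c : ℝ, 2 * ((k + 1 : ℕ) : ℝ) * a * (b ^ k)⁻¹ * c = 2 * (k + 1) * a * c / b ^ k by
    intros; push_cast; ring, le_div_iff₀ (pow_pos hρ k)]
  exact hdiam
end

section
/- Let m ≥ 2, let Ω be an open convex subset of ℝ^m, let ρ > 0 and x₀ ∈ ℝ^m be such that the open ball B(x₀;ρ) ⊆ Ω, and let d be a point of the topological boundary of Ω. Then the Lebesgue measure of Ω satisfies |Ω| ≥ m^{-1}·ω_{m-1}·|d − x₀|·ρ^{m-1}. -/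
/-!
By convexity, `Ω` contains the open cone with apex `d` whose base is the `(m-1)`-disc of radius `ρ`
centred at `x₀` and orthogonal to `x₀ - d`: its slice at distance `s` from `d` lies in the image of
`B(x₀; ρ)` under the homothety of centre `d` and ratio `s / |d - x₀|`, and that image lies in `Ω`
because segments from interior points of `Ω` to `d ∈ closure Ω` stay in `Ω`. In coordinates
adapted to the axis of the cone, Fubini gives its volume `ω_{m-1} ρ^{m-1} |d - x₀| / m`.
-/

open MeasureTheory Metric Set Module

theorem Convex.ball_homothety_subset_interior {F : Type*} [NormedAddCommGroup F] [NormedSpace ℝ F]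
    {Ω : Set F} (hΩ : Convex ℝ Ω) {d x₀ : F} {ρ t : ℝ} (hd : d ∈ closure Ω)
    (hball : ball x₀ ρ ⊆ interior Ω) (ht₀ : 0 < t) (ht₁ : t ≤ 1) :
    ball (d + t • (x₀ - d)) (t * ρ) ⊆ interior Ω := by
  intro y hy
  set x := x₀ + t⁻¹ • (y - (d + t • (x₀ - d)))
  have hx : x ∈ ball x₀ ρ := by
    rw [mem_ball, dist_eq_norm, add_sub_cancel_left, norm_smul, norm_inv,
      Real.norm_of_nonneg ht₀.le, inv_mul_lt_iff₀ ht₀, ← dist_eq_norm]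
    exact hy
  have hy : y = t • x + (1 - t) • d := by
    simp only [x, smul_add, smul_smul, mul_inv_cancel₀ ht₀.ne', one_smul]
    module
  exact hy ▸ hΩ.combo_interior_closure_mem_interior (hball hx) hd ht₀ (sub_nonneg.2 ht₁)
    (add_sub_cancel _ _)

theorem lintegral_Ioo_ofReal_pow (k : ℕ) {h : ℝ} (hh : 0 ≤ h) :
    ∫⁻ s in Ioo 0 h, ENNReal.ofReal (s ^ k) = ENNReal.ofReal (h ^ (k + 1) / (k + 1)) := by
  rw [← ofReal_integral_eq_lintegral_ofReal, ← integral_Ioc_eq_integral_Ioo,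
    ← intervalIntegral.integral_of_le hh, integral_pow]
  · simp
  · exact (continuous_pow k).integrableOn_Icc.mono_set Ioo_subset_Icc_self
  · exact (ae_restrict_iff' measurableSet_Ioo).2 (.of_forall fun s hs ↦ pow_nonneg hs.1.le k)

section SolidCone

variable {F : Type*} [NormedAddCommGroup F]

def solidCone (h r : ℝ) : Set (ℝ × F) := {p | p.1 ∈ Ioo 0 h ∧ ‖p.2‖ < r * p.1 / h}

theorem isOpen_solidCone (h r : ℝ) : IsOpen (solidCone (F := F) h r) :=
  (isOpen_Ioo.preimage continuous_fst).inter <|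
    isOpen_lt continuous_snd.norm ((continuous_const.mul continuous_fst).div_const h)

theorem measure_preimage_mk_solidCone [MeasurableSpace F] (μ : Measure F) (h r s : ℝ) :
    μ (Prod.mk s ⁻¹' solidCone h r) = (Ioo 0 h).indicator (fun s ↦ μ (ball 0 (r * s / h))) s := by
  by_cases hs : s ∈ Ioo 0 h
  · rw [indicator_of_mem hs]
    congr 1
    ext z
    simp [solidCone, hs.1, hs.2]
  · rw [mem_Ioo] at hs
    simp [solidCone, hs]

variable [NormedSpace ℝ F] [FiniteDimensional ℝ F] [MeasurableSpace F] [BorelSpace F]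

theorem prod_apply_solidCone (μ : Measure F) [μ.IsAddHaarMeasure] {h r : ℝ} (hh : 0 < h)
    (hr : 0 < r) :
    (volume.prod μ) (solidCone h r) =
      ENNReal.ofReal (r ^ finrank ℝ F * h / (finrank ℝ F + 1)) * μ (ball 0 1) := by
  set k := finrank ℝ F
  have slice (s : ℝ) (hs : s ∈ Ioo 0 h) :
      μ (ball 0 (r * s / h)) =
        ENNReal.ofReal ((r / h) ^ k) * ENNReal.ofReal (s ^ k) * μ (ball 0 1) := by
    rw [Measure.addHaar_ball_of_pos μ _ (by have := hs.1; positivity),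
      ← ENNReal.ofReal_mul (by positivity), ← mul_pow, mul_div_right_comm]
  calc (volume.prod μ) (solidCone h r)
      = ∫⁻ s in Ioo 0 h, ENNReal.ofReal ((r / h) ^ k) * ENNReal.ofReal (s ^ k) * μ (ball 0 1) := by
        simp_rw [Measure.prod_apply (isOpen_solidCone h r).measurableSet,
          measure_preimage_mk_solidCone, lintegral_indicator measurableSet_Ioo]
        exact setLIntegral_congr_fun measurableSet_Ioo slice
    _ = ENNReal.ofReal ((r / h) ^ k) * ENNReal.ofReal (h ^ (k + 1) / (k + 1)) * μ (ball 0 1) := by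
        rw [lintegral_mul_const' _ _ measure_ball_lt_top.ne,
          lintegral_const_mul' _ _ ENNReal.ofReal_ne_top, lintegral_Ioo_ofReal_pow k hh.le]
    _ = _ := by
        rw [← ENNReal.ofReal_mul (by positivity)]
        congr 2
        rw [div_pow]
        field_simp
        ring

end SolidCone

theorem EuclideanSpace.measurePreserving_toLp_finCons (n : ℕ) :
    MeasurePreserving (fun p : ℝ × EuclideanSpace ℝ (Fin n) ↦
      (WithLp.toLp 2 (Fin.cons p.1 p.2.ofLp : Fin (n + 1) → ℝ))) := by
  have h := ((PiLp.volume_preserving_toLp (Fin (n + 1))).comp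
    (volume_preserving_piFinSuccAbove (fun _ : Fin (n + 1) ↦ ℝ) 0).symm).comp
    ((MeasurePreserving.id volume).prod (PiLp.volume_preserving_ofLp (Fin n)))
  convert h using 2 with p
  · rw [← Fin.insertNth_zero']
    rfl
  · exact (Measure.volume_eq_prod _ _).symm

theorem EuclideanSpace.toLp_finCons_sub_smul_single {n : ℕ} (s : ℝ)
    (z : EuclideanSpace ℝ (Fin n)) :
    WithLp.toLp 2 (Fin.cons s z.ofLp : Fin (n + 1) → ℝ) - s • EuclideanSpace.single 0 1 =
      WithLp.toLp 2 (Fin.cons 0 z.ofLp) := by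
  ext i
  induction i using Fin.cases <;> simp [Fin.succ_ne_zero]

theorem EuclideanSpace.norm_toLp_finCons_zero {n : ℕ} (z : EuclideanSpace ℝ (Fin n)) :
    ‖WithLp.toLp 2 (Fin.cons 0 z.ofLp : Fin (n + 1) → ℝ)‖ = ‖z‖ := by
  simp [EuclideanSpace.norm_eq, Fin.sum_univ_succ]

theorem exists_measurePreserving_norm_sub_smul_eq {E : Type*} [NormedAddCommGroup E]
    [InnerProductSpace ℝ E] [FiniteDimensional ℝ E] [MeasurableSpace E] [BorelSpace E]
    {n : ℕ} (hE : finrank ℝ E = n + 1) {u : E} (hu : ‖u‖ = 1) :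
    ∃ L : ℝ × EuclideanSpace ℝ (Fin n) → E, MeasurePreserving L ∧
      ∀ s z, ‖L (s, z) - s • u‖ = ‖z‖ := by
  have hON : Orthonormal ℝ (({0} : Set (Fin (n + 1))).domRestrict fun _ ↦ u) :=
    ⟨fun _ ↦ hu, fun i j hij ↦ (hij (Subsingleton.elim i j)).elim⟩
  obtain ⟨b, hb⟩ := hON.exists_orthonormalBasis_extension_of_card_eq (by simp [hE])
  refine ⟨fun p ↦ b.repr.symm (WithLp.toLp 2 (Fin.cons p.1 p.2.ofLp)),
    b.measurePreserving_repr_symm.comp (EuclideanSpace.measurePreserving_toLp_finCons n),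
    fun s z ↦ ?_⟩
  have hu' : u = b.repr.symm (EuclideanSpace.single 0 1) := by
    rw [b.repr_symm_single, hb 0 rfl]
  rw [hu', ← map_smul, ← map_sub, LinearIsometryEquiv.norm_map,
    EuclideanSpace.toLp_finCons_sub_smul_single, EuclideanSpace.norm_toLp_finCons_zero]

theorem measure_ge_cone_general (m : ℕ)
    (Ω : Set (EuclideanSpace ℝ (Fin m)))
    (hopen : IsOpen Ω) (hconv : Convex ℝ Ω)
    (ρ : ℝ) (hρ : 0 < ρ) (x₀ : EuclideanSpace ℝ (Fin m))
    (hball : ball x₀ ρ ⊆ Ω)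
    (d : EuclideanSpace ℝ (Fin m)) (hd : d ∈ frontier Ω) :
    ENNReal.ofReal ((m : ℝ)⁻¹ *
        (volume (ball (0 : EuclideanSpace ℝ (Fin (m - 1))) 1)).toReal *
        dist d x₀ * ρ ^ (m - 1)) ≤ volume Ω := by
  rcases m with _ | n
  · simp -- `(0 : ℝ)⁻¹ = 0`
  set h := dist d x₀
  have hρh : ρ ≤ h := not_lt.1 fun hlt ↦
    hd.2 (hopen.interior_eq.symm ▸ hball (mem_ball.2 hlt))
  have hh : 0 < h := hρ.trans_le hρh
  set u := h⁻¹ • (x₀ - d)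
  have hu : ‖u‖ = 1 := by
    rw [norm_smul, norm_inv, Real.norm_of_nonneg hh.le, ← dist_eq_norm, dist_comm,
      inv_mul_cancel₀ hh.ne']
  obtain ⟨L, hL, hLu⟩ := exists_measurePreserving_norm_sub_smul_eq (n := n) (by simp) hu
  have hcone : solidCone h ρ ⊆ (fun p ↦ d + L p) ⁻¹' Ω := by
    rintro ⟨s, z⟩ ⟨hs, hz⟩
    rw [← hopen.interior_eq] at hball ⊢
    refine hconv.ball_homothety_subset_interior hd.1 hball (t := s / h) (div_pos hs.1 hh)
      ((div_le_one hh).2 hs.2.le) ?_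
    have hsu : (s / h) • (x₀ - d) = s • u := by rw [smul_smul, div_eq_mul_inv]
    rw [mem_ball, dist_add_left, dist_eq_norm, hsu, hLu]
    exact hz.trans_eq (by ring)
  have hvol (V : ℝ) : ((n + 1 : ℕ) : ℝ)⁻¹ * V * h * ρ ^ n = ρ ^ n * h / (n + 1) * V := by
    push_cast
    ring
  calc _ = volume (solidCone (F := EuclideanSpace ℝ (Fin n)) h ρ) := by
        rw [Nat.add_sub_cancel, hvol, ENNReal.ofReal_mul (by positivity),
          ENNReal.ofReal_toReal measure_ball_lt_top.ne, Measure.volume_eq_prod,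
          prod_apply_solidCone volume hh hρ, finrank_euclideanSpace_fin]
    _ ≤ volume ((fun p ↦ d + L p) ⁻¹' Ω) := measure_mono hcone
    _ = volume Ω := ((measurePreserving_add_left volume d).comp hL).measure_preimage
        hopen.measurableSet.nullMeasurableSet

/-- if `Ω ⊆ ℝ^m` (`m ≥ 2`) is open and convex, contains the open ball
`B(x₀; ρ)`, and `d` is a boundary point of `Ω`, then
`|Ω| ≥ m⁻¹ ω_{m-1} |d - x₀| ρ^{m-1}`. -/
theorem measure_ge_cone (m : ℕ) (hm : 2 ≤ m)
    (Ω : Set (EuclideanSpace ℝ (Fin m)))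
    (hopen : IsOpen Ω) (hconv : Convex ℝ Ω)
    (ρ : ℝ) (hρ : 0 < ρ) (x₀ : EuclideanSpace ℝ (Fin m))
    (hball : ball x₀ ρ ⊆ Ω)
    (d : EuclideanSpace ℝ (Fin m)) (hd : d ∈ frontier Ω) :
    ENNReal.ofReal ((m : ℝ)⁻¹ *
        (volume (ball (0 : EuclideanSpace ℝ (Fin (m - 1))) 1)).toReal *
        dist d x₀ * ρ ^ (m - 1)) ≤ volume Ω :=
  measure_ge_cone_general m Ω hopen hconv ρ hρ x₀ hball d hd
end

section
/- Let A be an open convex subset of ℝ^m, let ρ > 0 and x ∈ ℝ^m be such that the open ball B(x;ρ) ⊆ A, and let ε > 0. Then the open ε-neighbourhood A^ε = {y ∈ ℝ^m : dist(y,A) < ε} satisfies A^ε ⊆ x + (1 + ε/ρ)·(A − x), i.e. A^ε is contained in the image of A under the homothety with centre x and ratio 1 + ε/ρ. -/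
open MeasureTheory Metric

/-- if `A ⊆ ℝ^m` is open and convex and contains the open ball `B(x; ρ)`,
then for every `ε > 0` the open `ε`-neighbourhood `A^ε = {y : dist(y, A) < ε}` is contained
in the homothety of `A` with centre `x` and ratio `1 + ε/ρ`. -/
theorem eps_neighbourhood_subset_homothety (m : ℕ)
    (A : Set (EuclideanSpace ℝ (Fin m)))
    (hopen : IsOpen A) (hconv : Convex ℝ A)
    (x : EuclideanSpace ℝ (Fin m)) (ρ : ℝ) (hρ : 0 < ρ)
    (hball : ball x ρ ⊆ A) (ε : ℝ) (hε : 0 < ε) :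
    {y : EuclideanSpace ℝ (Fin m) | infDist y A < ε} ⊆
      (fun a => x + (1 + ε / ρ) • (a - x)) '' A := by
  intro y hy
  have hAne : A.Nonempty := ⟨x, hball (mem_ball_self hρ)⟩
  obtain ⟨z, hz, hzy⟩ := (Metric.infDist_lt_iff hAne).1 hy
  have hερ : 0 < ε / ρ := div_pos hε hρ
  have ht0 : 0 < 1 + ε / ρ := by linarith
  refine ⟨x + (1 + ε / ρ)⁻¹ • (y - x), ?_, ?_⟩
  · have hw : x + (ε / ρ)⁻¹ • (y - z) ∈ A := by
      apply hball
      rw [mem_ball]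
      have h1 : dist (x + (ε / ρ)⁻¹ • (y - z)) x = (ε / ρ)⁻¹ * dist y z := by
        rw [dist_eq_norm, add_sub_cancel_left, norm_smul, Real.norm_eq_abs,
          abs_of_pos (inv_pos.2 hερ), dist_eq_norm]
      rw [h1]
      calc (ε / ρ)⁻¹ * dist y z < (ε / ρ)⁻¹ * ε :=
            mul_lt_mul_of_pos_left hzy (inv_pos.2 hερ)
        _ = ρ := by field_simp
    have ha : (0:ℝ) ≤ (1 + ε / ρ)⁻¹ := le_of_lt (inv_pos.2 ht0)
    have hb : (0:ℝ) ≤ 1 - (1 + ε / ρ)⁻¹ := by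
      have : (1 + ε / ρ)⁻¹ ≤ 1 := by
        rw [inv_le_one_iff₀]; right; linarith
      linarith
    have hmem := hconv hz hw ha hb (by ring)
    have heq : x + (1 + ε / ρ)⁻¹ • (y - x) =
        (1 + ε / ρ)⁻¹ • z + (1 - (1 + ε / ρ)⁻¹) • (x + (ε / ρ)⁻¹ • (y - z)) := by
      match_scalars <;> field_simp <;> ring
    rw [heq]; exact hmem
  · show x + (1 + ε / ρ) • (x + (1 + ε / ρ)⁻¹ • (y - x) - x) = y
    rw [add_sub_cancel_left, smul_smul, mul_inv_cancel₀ ht0.ne', one_smul,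
      add_sub_cancel]
end

section
/- Let A and B be nonempty bounded open convex subsets of ℝ^m and let ε > 0 be such that the Hausdorff distance between A and B is at most ε and ε < ρ(A), where ρ denotes inradius. Then ρ(B) ≥ ρ(A) − ε. -/
open MeasureTheory Metric

/-!
Let `B(x, r) ⊆ A` and `y ∈ B(x, r - ε)`. If `y ∉ B`, separate `y` from the open convex set
`B` by a hyperplane and move from `y` a distance `t ∈ (ε, r - |y - x|)` away from `B`,
perpendicularly to that hyperplane. The point reached lies in `B(x, r) ⊆ A` but at distance
more than `ε` from `B`, contradicting `d^H(A, B) ≤ ε`. Hence `B(x, r - ε) ⊆ B`.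
-/

section Separation

variable {E : Type*} [NormedAddCommGroup E] [InnerProductSpace ℝ E] [CompleteSpace E]
  {B : Set E} {y : E}

open scoped RealInnerProductSpace

theorem exists_norm_eq_one_forall_inner_lt_of_notMem (hBo : IsOpen B) (hBc : Convex ℝ B)
    (hBne : B.Nonempty) (hy : y ∉ B) :
    ∃ w : E, ‖w‖ = 1 ∧ ∀ b ∈ B, ⟪w, b⟫ < ⟪w, y⟫ := by
  obtain ⟨f, hf⟩ := geometric_hahn_banach_open_point hBc hBo hy
  set v := (InnerProductSpace.toDual ℝ E).symm f
  have hv : v ≠ 0 := by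
    obtain ⟨b, hb⟩ := hBne
    intro hv0
    have := hf b hb
    rw [(InnerProductSpace.toDual ℝ E).symm.map_eq_zero_iff.1 hv0] at this
    exact lt_irrefl _ this
  refine ⟨‖v‖⁻¹ • v, norm_smul_inv_norm hv, fun b hb => ?_⟩
  simp only [real_inner_smul_left, v, InnerProductSpace.toDual_symm_apply]
  exact mul_lt_mul_of_pos_left (hf b hb) (inv_pos.2 (norm_pos_iff.2 hv))

theorem exists_dist_eq_forall_lt_dist_of_notMem (hBo : IsOpen B) (hBc : Convex ℝ B)
    (hBne : B.Nonempty) (hy : y ∉ B) {t : ℝ} (ht : 0 ≤ t) :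
    ∃ z, dist z y = t ∧ ∀ b ∈ B, t < dist z b := by
  obtain ⟨w, hw, hwB⟩ := exists_norm_eq_one_forall_inner_lt_of_notMem hBo hBc hBne hy
  refine ⟨y + t • w, by simp [dist_eq_norm, norm_smul, hw, abs_of_nonneg ht], fun b hb => ?_⟩
  calc t < t + (⟪w, y⟫ - ⟪w, b⟫) := by linarith [hwB b hb]
    _ = ⟪w, y + t • w - b⟫ := by
      rw [inner_sub_right, inner_add_right, real_inner_smul_right, real_inner_self_eq_norm_sq,
        hw]
      ring
    _ ≤ ‖w‖ * ‖y + t • w - b‖ := real_inner_le_norm _ _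
    _ = dist (y + t • w) b := by rw [hw, one_mul, dist_eq_norm]

theorem ball_sub_subset_of_forall_infDist_le {A : Set E} (hBo : IsOpen B) (hBc : Convex ℝ B)
    (hBne : B.Nonempty) {ε : ℝ} (hε : 0 ≤ ε) (hAB : ∀ a ∈ A, infDist a B ≤ ε)
    {x : E} {r : ℝ} (hx : ball x r ⊆ A) : ball x (r - ε) ⊆ B := by
  intro y hy
  by_contra hyB
  rw [mem_ball] at hy
  obtain ⟨t, hεt, htr⟩ := exists_between (show ε < r - dist y x by linarith)
  obtain ⟨z, hzy, hzB⟩ :=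
    exists_dist_eq_forall_lt_dist_of_notMem hBo hBc hBne hyB (hε.trans hεt.le)
  have hzA : z ∈ A := hx <| mem_ball.2 <| by linarith [dist_triangle z y x]
  obtain ⟨b, hb, hzb⟩ := (infDist_lt_iff hBne).1 ((hAB z hzA).trans_lt hεt)
  exact (hzB b hb).not_gt hzb

end Separation

section Inradius

variable {m : ℕ} {A B : Set (EuclideanSpace ℝ (Fin m))}

theorem inradius_nonneg (A : Set (EuclideanSpace ℝ (Fin m))) : 0 ≤ inradius A :=
  Real.sSup_nonneg fun _ hr => hr.1.le

variable [Nontrivial (EuclideanSpace ℝ (Fin m))]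

theorem le_inradius (hB : Bornology.IsBounded B) {x : EuclideanSpace ℝ (Fin m)} {r : ℝ}
    (hr : 0 < r) (hx : ball x r ⊆ B) : r ≤ inradius B := by
  refine le_csSup ⟨diam B / 2, ?_⟩ ⟨hr, x, hx⟩
  rintro s ⟨hs, z, hz⟩
  have := diam_ball_eq z hs.le ▸ diam_mono hz hB
  linarith

theorem inradius_le_inradius_add (hB : Bornology.IsBounded B) {ε : ℝ} (hε : 0 ≤ ε)
    (hAB : ∀ x r, ball x r ⊆ A → ball x (r - ε) ⊆ B) : inradius A ≤ inradius B + ε := by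
  refine Real.sSup_le (fun r ⟨_, x, hx⟩ => ?_) (by linarith [inradius_nonneg B])
  rcases le_or_gt r ε with hrε | hεr
  · linarith [inradius_nonneg B]
  · linarith [le_inradius hB (sub_pos.2 hεr) (hAB x r hx)]

end Inradius

theorem inradius_ge_sub_of_hausdorffDist_le_general (m : ℕ)
    (A B : Set (EuclideanSpace ℝ (Fin m)))
    (hAne : A.Nonempty) (hAbd : Bornology.IsBounded A)
    (hBne : B.Nonempty) (hBbd : Bornology.IsBounded B)
    (hBopen : IsOpen B) (hBconv : Convex ℝ B)
    (ε : ℝ)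
    (hH : hausdorffDist A B ≤ ε) :
    inradius A - ε ≤ inradius B := by
  have hε : 0 ≤ ε := hausdorffDist_nonneg.trans hH
  rcases subsingleton_or_nontrivial (EuclideanSpace ℝ (Fin m)) with _ | _
  · rw [Subsingleton.eq_univ_of_nonempty hAne, Subsingleton.eq_univ_of_nonempty hBne]
    linarith
  have hfin := hausdorffEDist_ne_top_of_nonempty_of_bounded hAne hBne hAbd hBbd
  have hAB : ∀ a ∈ A, infDist a B ≤ ε := fun a ha =>
    (infDist_le_hausdorffDist_of_mem ha hfin).trans hH
  linarith [inradius_le_inradius_add hBbd hε fun x r hx =>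
    ball_sub_subset_of_forall_infDist_le hBopen hBconv hBne hε hAB hx]

/-- if `A, B ⊆ ℝ^m` are nonempty bounded open convex sets whose Hausdorff
distance is at most `ε` with `ε < ρ(A)`, then `ρ(B) ≥ ρ(A) - ε`. -/
theorem inradius_ge_sub_of_hausdorffDist_le (m : ℕ)
    (A B : Set (EuclideanSpace ℝ (Fin m)))
    (hAne : A.Nonempty) (hAbd : Bornology.IsBounded A)
    (hAopen : IsOpen A) (hAconv : Convex ℝ A)
    (hBne : B.Nonempty) (hBbd : Bornology.IsBounded B)
    (hBopen : IsOpen B) (hBconv : Convex ℝ B)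
    (ε : ℝ) (hε : 0 < ε)
    (hH : hausdorffDist A B ≤ ε) (hεlt : ε < inradius A) :
    inradius A - ε ≤ inradius B :=
  inradius_ge_sub_of_hausdorffDist_le_general m A B hAne hAbd hBne hBbd hBopen hBconv ε hH
end

section
/- Let m ≥ 2 and τ > 0, and let T be a real-valued set function defined on the open convex subsets of ℝ^m that is invariant under isometries of ℝ^m, monotone (Ω₁ ⊆ Ω₂ implies T(Ω₁) ≤ T(Ω₂) for open convex Ω₁, Ω₂), non-negative, and homogeneous of degree τ (T(αΩ) = α^τ·T(Ω) for every α > 0 and every open convex Ω). Let A and B be nonempty open bounded convex subsets of ℝ^m and let ε be the Hausdorff distance between A and B. If ε ≤ ρ(A)/2, where ρ denotes inradius, then |T(A) − T(B)| ≤ (2τ·3^τ·ε/ρ(A))·T(A). -/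
open MeasureTheory Metric Pointwise

section Helpers

variable {V : Type*} [NormedAddCommGroup V] [NormedSpace ℝ V]

/-- Covering lemma: if `A` is convex containing `ball x r` and every point of `S` is within
`t*r` of `A`, then `S` is contained in the homothety of `A` about `x` with ratio `1+t`. -/
lemma cover_subset {A S : Set V} (hA : Convex ℝ A) {x : V} {r t : ℝ} (ht : 0 < t)
    (hball : ball x r ⊆ A) (hS : ∀ b ∈ S, ∃ a ∈ A, dist b a < t * r) :
    S ⊆ x +ᵥ (1 + t) • ((-x) +ᵥ A) := by
  intro b hb
  obtain ⟨a, ha, hab⟩ := hS b hb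
  have ht1 : (0:ℝ) < 1 + t := by linarith
  set c : V := x + t⁻¹ • (b - a) with hc
  have hcball : c ∈ ball x r := by
    rw [mem_ball, hc, dist_eq_norm]
    have : x + t⁻¹ • (b - a) - x = t⁻¹ • (b - a) := by abel
    rw [this, norm_smul, Real.norm_eq_abs, abs_of_pos (inv_pos.2 ht)]
    calc t⁻¹ * ‖b - a‖ < t⁻¹ * (t * r) := by
          apply mul_lt_mul_of_pos_left _ (inv_pos.2 ht)
          rw [← dist_eq_norm]; exact hab
      _ = r := by field_simp
  set a' : V := (1 + t)⁻¹ • a + (t / (1 + t)) • c with ha'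
  have ha'A : a' ∈ A := by
    apply hA ha (hball hcball) (by positivity) (by positivity)
    field_simp
  have key : b = x +ᵥ ((1 + t) • ((-x) +ᵥ a')) := by
    show b = x + ((1 + t) • (-x + a'))
    rw [ha', hc]
    match_scalars <;> field_simp <;> ring
  rw [key]
  exact Set.vadd_mem_vadd_set (Set.smul_mem_smul_set (Set.vadd_mem_vadd_set ha'A))

/-- For an open convex set, the interior of the closure is the set itself. -/
lemma open_convex_interior_closure {s : Set V} (hs : Convex ℝ s) (ho : IsOpen s) :
    interior (closure s) = s := by
  apply subset_antisymm
  · intro y hy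
    rcases s.eq_empty_or_nonempty with rfl | ⟨x, hx⟩
    · simpa using hy
    obtain ⟨δ, hδ, hball⟩ := Metric.isOpen_iff.1 isOpen_interior y hy
    have hballcl : ball y δ ⊆ closure s := hball.trans interior_subset
    set θ : ℝ := δ / (2 * ‖y - x‖ + 1) with hθdef
    have hθ : 0 < θ := by positivity
    have hy' : y + θ • (y - x) ∈ closure s := by
      apply hballcl
      rw [mem_ball, dist_eq_norm]
      have : y + θ • (y - x) - y = θ • (y - x) := by abel
      rw [this, norm_smul, Real.norm_eq_abs, abs_of_pos hθ, hθdef]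
      rw [div_mul_eq_mul_div, div_lt_iff₀ (by positivity)]
      nlinarith [norm_nonneg (y - x)]
    have hcomb := hs.combo_closure_interior_mem_interior hy'
      (by rwa [ho.interior_eq]) (by positivity : (0:ℝ) ≤ 1 / (1 + θ))
      (by positivity : (0:ℝ) < θ / (1 + θ)) (by field_simp)
    have : (1 / (1 + θ)) • (y + θ • (y - x)) + (θ / (1 + θ)) • x = y := by
      match_scalars <;> field_simp <;> ring
    rw [this, ho.interior_eq] at hcomb
    exact hcomb
  · exact interior_maximal subset_closure ho

/-- Half-space separation: shrunk ball inside a convex set's closure. -/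
lemma ball_subset_closure {B : Set V} (hB : Convex ℝ B) {x : V} {r ε' : ℝ}
    (hε' : 0 < ε') (h : ∀ y ∈ ball x r, ∃ b ∈ B, dist y b < ε') :
    ball x (r - ε') ⊆ closure B := by
  intro y hy
  by_contra hyB
  obtain ⟨f, u, hfu, huy⟩ :=
    geometric_hahn_banach_closed_point hB.closure isClosed_closure hyB
  have hd : dist y x < r - ε' := mem_ball.1 hy
  set t : ℝ := (ε' + (r - dist y x)) / 2 with htdef
  have htl : ε' < t := by rw [htdef]; linarith
  have htu : t < r - dist y x := by rw [htdef]; linarith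
  have ht : 0 < t := lt_trans hε' htl
  have hfne : f ≠ 0 := by
    obtain ⟨b, hb, _⟩ := h y (mem_ball.2 (by linarith))
    intro h0
    have h1 := hfu b (subset_closure hb)
    rw [h0] at h1 huy
    simp at h1 huy
    linarith
  have hfnorm : 0 < ‖f‖ := norm_pos_iff.2 hfne
  have hlt : ‖f‖ * (ε' / t) < ‖f‖ := by
    have : ε' / t < 1 := (div_lt_one ht).2 htl
    nlinarith
  obtain ⟨v, hv1, hv2⟩ := f.exists_lt_apply_of_lt_opNorm hlt
  have hfv : ∃ w : V, ‖w‖ ≤ 1 ∧ ‖f‖ * (ε' / t) < f w := by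
    rcases le_or_gt (f v) 0 with hle | hpos
    · refine ⟨-v, by simpa using hv1.le, ?_⟩
      rw [map_neg]
      rw [Real.norm_eq_abs, abs_of_nonpos hle] at hv2
      exact hv2
    · exact ⟨v, hv1.le, by rwa [Real.norm_eq_abs, abs_of_pos hpos] at hv2⟩
  obtain ⟨w, hw1, hw2⟩ := hfv
  have hz : y + t • w ∈ ball x r := by
    rw [mem_ball]
    calc dist (y + t • w) x ≤ dist (y + t • w) y + dist y x := dist_triangle _ _ _
      _ ≤ t * ‖w‖ + dist y x := by
          rw [dist_eq_norm]
          have : y + t • w - y = t • w := by abel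
          rw [this, norm_smul, Real.norm_eq_abs, abs_of_pos ht]
      _ ≤ t * 1 + dist y x := by nlinarith
      _ < r := by linarith
  obtain ⟨b, hb, hzb⟩ := h _ hz
  have h1 : f b < u := hfu b (subset_closure hb)
  have h2 : f (y + t • w) - f b ≤ ‖f‖ * dist (y + t • w) b := by
    calc f (y + t • w) - f b = f (y + t • w - b) := by rw [map_sub]
      _ ≤ ‖f (y + t • w - b)‖ := le_abs_self _
      _ ≤ ‖f‖ * ‖y + t • w - b‖ := f.le_opNorm _
      _ = ‖f‖ * dist (y + t • w) b := by rw [dist_eq_norm]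
  have h3 : f (y + t • w) = f y + t * f w := by
    rw [map_add, ContinuousLinearMap.map_smul, smul_eq_mul]
  have h4 : ‖f‖ * dist (y + t • w) b < ‖f‖ * ε' :=
    mul_lt_mul_of_pos_left hzb hfnorm
  have h5 : ‖f‖ * ε' < t * f w := by
    have := mul_lt_mul_of_pos_left hw2 ht
    calc ‖f‖ * ε' = t * (‖f‖ * (ε' / t)) := by field_simp
      _ < t * f w := this
  linarith

/-- elementary rpow inequalities -/
lemma rpow_ineq {s τ : ℝ} (hτ : 0 < τ) (hs : 0 ≤ s) :
    (1 + s) ^ τ - 1 ≤ τ * s * (1 + s) ^ τ ∧ 1 - (1 + s) ^ (-τ) ≤ τ * s := by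
  have h1s : (0:ℝ) < 1 + s := by linarith
  set L : ℝ := Real.log (1 + s) * τ with hL
  have hLnn : 0 ≤ L := mul_nonneg (Real.log_nonneg (by linarith)) hτ.le
  have hLle : L ≤ τ * s := by
    have := Real.log_le_sub_one_of_pos h1s
    calc L = Real.log (1 + s) * τ := rfl
      _ ≤ s * τ := by nlinarith
      _ = τ * s := mul_comm _ _
  have hpow : (1 + s) ^ τ = Real.exp L := Real.rpow_def_of_pos h1s τ
  have hpowneg : (1 + s) ^ (-τ) = Real.exp (-L) := by
    rw [Real.rpow_def_of_pos h1s, hL]; ring_nf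
  constructor
  · rw [hpow]
    have hexp : 1 - L ≤ Real.exp (-L) := by
      have := Real.add_one_le_exp (-L); linarith
    have hexppos : 0 < Real.exp L := Real.exp_pos _
    have : (1 - L) * Real.exp L ≤ 1 := by
      calc (1 - L) * Real.exp L ≤ Real.exp (-L) * Real.exp L :=
            mul_le_mul_of_nonneg_right hexp hexppos.le
        _ = 1 := by rw [← Real.exp_add]; simp
    nlinarith
  · rw [hpowneg]
    have := Real.add_one_le_exp (-L)
    linarith

end Helpers

/-- for a set function `T` on the open convex subsets of `ℝ^m` which is
isometry invariant, monotone, non-negative and homogeneous of degree `τ > 0`, and nonempty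
open bounded convex sets `A, B` at Hausdorff distance `ε ≤ ρ(A)/2`, one has
`|T(A) - T(B)| ≤ (2 τ 3^τ ε / ρ(A)) T(A)`. -/
theorem abs_T_sub_le (m : ℕ) (hm : 2 ≤ m) (τ : ℝ) (hτ : 0 < τ)
    (T : Set (EuclideanSpace ℝ (Fin m)) → ℝ)
    (hiso : ∀ (f : EuclideanSpace ℝ (Fin m) ≃ᵢ EuclideanSpace ℝ (Fin m))
      (Ω : Set (EuclideanSpace ℝ (Fin m))), IsOpen Ω → Convex ℝ Ω → T (f '' Ω) = T Ω)
    (hmono : ∀ Ω₁ Ω₂ : Set (EuclideanSpace ℝ (Fin m)), IsOpen Ω₁ → Convex ℝ Ω₁ →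
      IsOpen Ω₂ → Convex ℝ Ω₂ → Ω₁ ⊆ Ω₂ → T Ω₁ ≤ T Ω₂)
    (hnonneg : ∀ Ω : Set (EuclideanSpace ℝ (Fin m)), IsOpen Ω → Convex ℝ Ω → 0 ≤ T Ω)
    (hhom : ∀ (α : ℝ), 0 < α → ∀ Ω : Set (EuclideanSpace ℝ (Fin m)), IsOpen Ω →
      Convex ℝ Ω → T (α • Ω) = α ^ τ * T Ω)
    (A B : Set (EuclideanSpace ℝ (Fin m)))
    (hAne : A.Nonempty) (hAbd : Bornology.IsBounded A)
    (hAopen : IsOpen A) (hAconv : Convex ℝ A)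
    (hBne : B.Nonempty) (hBbd : Bornology.IsBounded B)
    (hBopen : IsOpen B) (hBconv : Convex ℝ B)
    (ε : ℝ) (hε : ε = hausdorffDist A B) (hεle : ε ≤ inradius A / 2) :
    |T A - T B| ≤ 2 * τ * (3 : ℝ) ^ τ * ε / inradius A * T A := by
  have hεnn : 0 ≤ ε := hε ▸ hausdorffDist_nonneg
  have fin := hausdorffEdist_ne_top_of_nonempty_of_bounded hAne hBne hAbd hBbd
  have hTA : 0 ≤ T A := hnonneg A hAopen hAconv
  -- inradius facts
  have hSne : {r : ℝ | 0 < r ∧ ∃ x, ball x r ⊆ A}.Nonempty := by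
    obtain ⟨a, ha⟩ := hAne
    obtain ⟨r, hr, hball⟩ := Metric.isOpen_iff.1 hAopen a ha
    exact ⟨r, hr, a, hball⟩
  have hSbdd : BddAbove {r : ℝ | 0 < r ∧ ∃ x, ball x r ⊆ A} := by
    obtain ⟨R, hR⟩ := hAbd.subset_closedBall 0
    refine ⟨4 * R, fun r hr => ?_⟩
    obtain ⟨hrpos, x, hx⟩ := hr
    have hxA : x ∈ closedBall (0 : EuclideanSpace ℝ (Fin m)) R := hR (hx (mem_ball_self hrpos))
    have hmpos : 0 < m := by omega
    set e : EuclideanSpace ℝ (Fin m) := EuclideanSpace.single (⟨0, hmpos⟩ : Fin m) (1:ℝ) with he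
    have hne : ‖e‖ = 1 := by rw [he, EuclideanSpace.norm_single]; norm_num
    have hy : x + (r/2) • e ∈ closedBall (0 : EuclideanSpace ℝ (Fin m)) R := by
      apply hR; apply hx
      rw [mem_ball, dist_eq_norm]
      have h0 : x + (r/2) • e - x = (r/2) • e := by abel
      rw [h0, norm_smul, Real.norm_eq_abs, abs_of_pos (by linarith), hne]
      linarith
    have h1 : dist x 0 ≤ R := mem_closedBall.1 hxA
    have h2 : dist (x + (r/2) • e) 0 ≤ R := mem_closedBall.1 hy
    have h3 : dist (x + (r/2) • e) x ≤ dist (x + (r/2) • e) 0 + dist 0 x := dist_triangle _ _ _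
    have h4 : dist (x + (r/2) • e) x = r/2 := by
      rw [dist_eq_norm]
      have h0 : x + (r/2) • e - x = (r/2) • e := by abel
      rw [h0, norm_smul, Real.norm_eq_abs, abs_of_pos (by linarith), hne]
      ring
    rw [dist_comm 0 x] at h3
    linarith
  set ρ : ℝ := inradius A with hρdef
  have hρpos : 0 < ρ := by
    obtain ⟨r, hr⟩ := hSne
    exact lt_of_lt_of_le hr.1 (le_csSup hSbdd hr)
  have hballs : ∀ s : ℝ, s < ρ → ∃ x, ball x s ⊆ A := by
    intro s hs
    obtain ⟨r, hrS, hsr⟩ := exists_lt_of_lt_csSup hSne hs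
    obtain ⟨-, x, hx⟩ := hrS
    exact ⟨x, (ball_subset_ball hsr.le).trans hx⟩
  -- trivial case ε = 0
  rcases eq_or_lt_of_le hεnn with hε0 | hεpos
  · have hcl : closure A = closure B :=
      (hausdorffDist_zero_iff_closure_eq_closure fin).1 (hε.symm.trans hε0.symm)
    have hAB : A = B := by
      calc A = interior (closure A) := (open_convex_interior_closure hAconv hAopen).symm
        _ = interior (closure B) := by rw [hcl]
        _ = B := open_convex_interior_closure hBconv hBopen
    rw [hAB, ← hε0]
    simp
  -- main case
  have Tvadd : ∀ (x : EuclideanSpace ℝ (Fin m)) (Ω : Set (EuclideanSpace ℝ (Fin m))),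
      IsOpen Ω → Convex ℝ Ω → T (x +ᵥ Ω) = T Ω := by
    intro x Ω ho hc
    have himg : (IsometryEquiv.constVAdd x :
        EuclideanSpace ℝ (Fin m) ≃ᵢ EuclideanSpace ℝ (Fin m)) '' Ω = x +ᵥ Ω := by
      ext y
      simp only [Set.mem_image, Set.mem_vadd_set, IsometryEquiv.constVAdd_apply, vadd_eq_add]
    rw [← himg, hiso _ Ω ho hc]
  have Thomo : ∀ (x : EuclideanSpace ℝ (Fin m)) (t : ℝ), 0 < t →
      ∀ Ω : Set (EuclideanSpace ℝ (Fin m)), IsOpen Ω → Convex ℝ Ω →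
      IsOpen (x +ᵥ (1 + t) • ((-x) +ᵥ Ω)) ∧ Convex ℝ (x +ᵥ (1 + t) • ((-x) +ᵥ Ω)) ∧
      T (x +ᵥ (1 + t) • ((-x) +ᵥ Ω)) = (1 + t) ^ τ * T Ω := by
    intro x t ht Ω ho hc
    have ht1 : (0:ℝ) < 1 + t := by linarith
    have ho1 : IsOpen ((-x) +ᵥ Ω) := ho.vadd _
    have hc1 : Convex ℝ ((-x) +ᵥ Ω) := hc.vadd _
    have ho2 : IsOpen ((1+t) • ((-x) +ᵥ Ω)) := ho1.smul₀ ht1.ne'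
    have hc2 : Convex ℝ ((1+t) • ((-x) +ᵥ Ω)) := hc1.smul _
    refine ⟨ho2.vadd _, hc2.vadd _, ?_⟩
    rw [Tvadd x _ ho2 hc2, hhom _ ht1 _ ho1 hc1, Tvadd (-x) Ω ho hc]
  have finBA : EMetric.hausdorffEdist B A ≠ ⊤ := by
    rwa [EMetric.hausdorffEdist_comm] at fin
  have hdB : ∀ b ∈ B, infDist b A ≤ ε := fun b hb => by
    rw [hε, hausdorffDist_comm]
    exact infDist_le_hausdorffDist_of_mem hb finBA
  have hdA : ∀ a ∈ A, infDist a B ≤ ε := fun a ha => by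
    rw [hε]; exact infDist_le_hausdorffDist_of_mem ha fin
  have hρε : 0 < ρ - ε := by linarith
  -- the key δ-approximate inequalities
  have hF : ∀ δ : ℝ, 0 < δ → δ < ρ/4 →
      T B - T A ≤ ((1 + (ε+δ)/(ρ-δ)) ^ τ - 1) * T A ∧
      T A - T B ≤ (1 - (1 + (ε+δ)/(ρ-ε-2*δ)) ^ (-τ)) * T A := by
    intro δ hδ hδρ
    have hεδ : 0 < ε + δ := by linarith
    have hr : 0 < ρ - δ := by linarith
    obtain ⟨x, hball⟩ := hballs (ρ - δ) (by linarith)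
    have hr2 : 0 < ρ - ε - 2*δ := by linarith
    set t₁ : ℝ := (ε+δ)/(ρ-δ) with ht₁def
    have ht₁ : 0 < t₁ := div_pos hεδ hr
    have hcov₁ : B ⊆ x +ᵥ (1+t₁) • ((-x) +ᵥ A) := by
      apply cover_subset hAconv ht₁ hball
      intro b hb
      have hlt : infDist b A < ε + δ := lt_of_le_of_lt (hdB b hb) (by linarith)
      obtain ⟨a, ha, hba⟩ := (infDist_lt_iff hAne).1 hlt
      exact ⟨a, ha, by rwa [ht₁def, div_mul_cancel₀ _ hr.ne']⟩
    obtain ⟨hoH₁, hcH₁, hTH₁⟩ := Thomo x t₁ ht₁ A hAopen hAconv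
    have hd1 : T B ≤ (1+t₁)^τ * T A :=
      hTH₁ ▸ hmono B _ hBopen hBconv hoH₁ hcH₁ hcov₁
    constructor
    · have heq : ((1+t₁)^τ - 1) * T A = (1+t₁)^τ * T A - T A := by ring
      rw [heq]; linarith
    · set t₂ : ℝ := (ε+δ)/(ρ-ε-2*δ) with ht₂def
      have ht₂ : 0 < t₂ := div_pos hεδ hr2
      have hthick : ∀ y ∈ ball x (ρ-δ), ∃ b ∈ B, dist y b < ε + δ := by
        intro y hy
        have hlt : infDist y B < ε + δ := lt_of_le_of_lt (hdA y (hball hy)) (by linarith)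
        exact (infDist_lt_iff hBne).1 hlt
      have hballB : ball x (ρ-ε-2*δ) ⊆ B := by
        have h1 : ball x ((ρ-δ) - (ε+δ)) ⊆ closure B :=
          ball_subset_closure hBconv hεδ hthick
        have h2 : ball x (ρ-ε-2*δ) ⊆ closure B := by
          have : ρ-ε-2*δ = (ρ-δ) - (ε+δ) := by ring
          rw [this]; exact h1
        calc ball x (ρ-ε-2*δ) ⊆ interior (closure B) := interior_maximal h2 isOpen_ball
          _ = B := open_convex_interior_closure hBconv hBopen
      have hcov₂ : A ⊆ x +ᵥ (1+t₂) • ((-x) +ᵥ B) := by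
        apply cover_subset hBconv ht₂ hballB
        intro a ha
        have hlt : infDist a B < ε + δ := lt_of_le_of_lt (hdA a ha) (by linarith)
        obtain ⟨b, hb, hab⟩ := (infDist_lt_iff hBne).1 hlt
        exact ⟨b, hb, by rwa [ht₂def, div_mul_cancel₀ _ hr2.ne']⟩
      obtain ⟨hoH₂, hcH₂, hTH₂⟩ := Thomo x t₂ ht₂ B hBopen hBconv
      have hd2 : T A ≤ (1+t₂)^τ * T B :=
        hTH₂ ▸ hmono A _ hAopen hAconv hoH₂ hcH₂ hcov₂
      have hb1t : (0:ℝ) < 1 + t₂ := by linarith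
      have hinv : (1+t₂)^(-τ) * T A ≤ T B := by
        rw [Real.rpow_neg hb1t.le, inv_mul_le_iff₀ (Real.rpow_pos_of_pos hb1t τ)]
        exact hd2
      have heq : (1 - (1+t₂)^(-τ)) * T A = T A - (1+t₂)^(-τ) * T A := by ring
      rw [heq]; linarith
  have hmemIoo : Set.Ioo (0:ℝ) (ρ/4) ∈ nhdsWithin (0:ℝ) (Set.Ioi 0) :=
    Ioo_mem_nhdsGT_of_mem ⟨le_refl 0, by positivity⟩
  -- limit 1
  have hlim1 : T B - T A ≤ ((1 + ε/ρ) ^ τ - 1) * T A := by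
    have hbase : ContinuousAt (fun δ : ℝ => 1 + (ε+δ)/(ρ-δ)) 0 := by
      apply ContinuousAt.add continuousAt_const
      apply ContinuousAt.div (by fun_prop) (by fun_prop)
      simpa using hρpos.ne'
    have hcont : ContinuousAt (fun δ : ℝ => ((1 + (ε+δ)/(ρ-δ)) ^ τ - 1) * T A) 0 :=
      ((hbase.rpow_const (Or.inr hτ.le)).sub continuousAt_const).mul continuousAt_const
    have htend : Filter.Tendsto (fun δ : ℝ => ((1 + (ε+δ)/(ρ-δ)) ^ τ - 1) * T A)
        (nhdsWithin 0 (Set.Ioi 0)) (nhds (((1 + ε/ρ) ^ τ - 1) * T A)) := by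
      have h : Filter.Tendsto (fun δ : ℝ => ((1 + (ε+δ)/(ρ-δ)) ^ τ - 1) * T A)
          (nhdsWithin 0 (Set.Ioi 0)) (nhds (((1 + (ε+0)/(ρ-0)) ^ τ - 1) * T A)) :=
        hcont.continuousWithinAt
      norm_num at h
      exact h
    apply ge_of_tendsto htend
    filter_upwards [hmemIoo] with δ hδ
    exact (hF δ hδ.1 hδ.2).1
  -- limit 2
  have hlim2 : T A - T B ≤ (1 - (1 + ε/(ρ-ε)) ^ (-τ)) * T A := by
    have hbase : ContinuousAt (fun δ : ℝ => 1 + (ε+δ)/(ρ-ε-2*δ)) 0 := by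
      apply ContinuousAt.add continuousAt_const
      apply ContinuousAt.div (by fun_prop) (by fun_prop)
      simpa using hρε.ne'
    have hb0 : (fun δ : ℝ => 1 + (ε+δ)/(ρ-ε-2*δ)) 0 ≠ 0 := by
      show (1:ℝ) + (ε+0)/(ρ-ε-2*0) ≠ 0
      have h0 : 0 < (ε+0)/(ρ-ε-2*0) := div_pos (by linarith) (by linarith)
      intro hc
      linarith
    have hcont : ContinuousAt (fun δ : ℝ => (1 - (1 + (ε+δ)/(ρ-ε-2*δ)) ^ (-τ)) * T A) 0 :=
      (continuousAt_const.sub (hbase.rpow_const (Or.inl hb0))).mul continuousAt_const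
    have htend : Filter.Tendsto (fun δ : ℝ => (1 - (1 + (ε+δ)/(ρ-ε-2*δ)) ^ (-τ)) * T A)
        (nhdsWithin 0 (Set.Ioi 0)) (nhds ((1 - (1 + ε/(ρ-ε)) ^ (-τ)) * T A)) := by
      have h : Filter.Tendsto (fun δ : ℝ => (1 - (1 + (ε+δ)/(ρ-ε-2*δ)) ^ (-τ)) * T A)
          (nhdsWithin 0 (Set.Ioi 0)) (nhds ((1 - (1 + (ε+0)/(ρ-ε-2*0)) ^ (-τ)) * T A)) :=
        hcont.continuousWithinAt
      norm_num at h
      exact h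
    apply ge_of_tendsto htend
    filter_upwards [hmemIoo] with δ hδ
    exact (hF δ hδ.1 hδ.2).2
  -- final numeric bounds
  have hεreρ : 0 ≤ ε/ρ := (div_pos hεpos hρpos).le
  have hsρ : ε/ρ ≤ 1/2 := by
    rw [div_le_iff₀ hρpos]
    linarith
  obtain ⟨hk1, -⟩ := rpow_ineq hτ hεreρ
  obtain ⟨-, hk2⟩ := rpow_ineq hτ (div_pos hεpos hρε).le
  have h3τ : (1 + ε/ρ) ^ τ ≤ (3:ℝ) ^ τ :=
    Real.rpow_le_rpow (by linarith) (by linarith) hτ.le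
  have h3τ1 : (1:ℝ) ≤ (3:ℝ) ^ τ := Real.one_le_rpow (by norm_num) hτ.le
  have hs2 : ε/(ρ-ε) ≤ 2*ε/ρ := by
    rw [div_le_div_iff₀ hρε hρpos]
    nlinarith
  rw [abs_sub_le_iff]
  constructor
  · calc T A - T B ≤ (1 - (1 + ε/(ρ-ε))^(-τ)) * T A := hlim2
      _ ≤ (τ * (ε/(ρ-ε))) * T A := mul_le_mul_of_nonneg_right hk2 hTA
      _ ≤ (τ * (2*ε/ρ)) * T A := by
          apply mul_le_mul_of_nonneg_right _ hTA
          exact mul_le_mul_of_nonneg_left hs2 hτ.le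
      _ ≤ 2 * τ * (3:ℝ)^τ * ε / ρ * T A := by
          have heq : 2 * τ * (3:ℝ)^τ * ε / ρ * T A = (3:ℝ)^τ * ((τ * (2*ε/ρ)) * T A) := by
            ring
          rw [heq]
          have hXnn : 0 ≤ (τ * (2*ε/ρ)) * T A := by
            apply mul_nonneg _ hTA
            apply mul_nonneg hτ.le
            positivity
          exact le_mul_of_one_le_left hXnn h3τ1
  · calc T B - T A ≤ ((1 + ε/ρ)^τ - 1) * T A := hlim1
      _ ≤ (τ * (ε/ρ) * (1+ε/ρ)^τ) * T A := mul_le_mul_of_nonneg_right hk1 hTA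
      _ ≤ (τ * (ε/ρ) * (3:ℝ)^τ) * T A := by
          apply mul_le_mul_of_nonneg_right _ hTA
          apply mul_le_mul_of_nonneg_left h3τ
          exact mul_nonneg hτ.le hεreρ
      _ ≤ 2 * τ * (3:ℝ)^τ * ε / ρ * T A := by
          have heq : 2 * τ * (3:ℝ)^τ * ε / ρ * T A = 2 * ((τ * (ε/ρ) * (3:ℝ)^τ) * T A) := by
            ring
          rw [heq]
          have hXnn : 0 ≤ (τ * (ε/ρ) * (3:ℝ)^τ) * T A := by
            apply mul_nonneg _ hTA
            apply mul_nonneg (mul_nonneg hτ.le hεreρ)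
            positivity
          linarith
end

section
/- Let m ≥ 2 and τ > 0, and let T be a real-valued set function defined on the open convex subsets of ℝ^m that is invariant under isometries of ℝ^m, monotone (Ω₁ ⊆ Ω₂ implies T(Ω₁) ≤ T(Ω₂) for open convex Ω₁, Ω₂), non-negative, and homogeneous of degree τ (T(αΩ) = α^τ·T(Ω) for every α > 0 and every open convex Ω). Let A be a nonempty open bounded convex subset of ℝ^m, let ρ > 0 and x ∈ ℝ^m be such that the open ball B(x;ρ) ⊆ A, and let ε > 0. Then T(A^ε) ≤ (1 + ε/ρ)^τ·T(A), where A^ε = {y ∈ ℝ^m : dist(y,A) < ε}. -/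
/-!
Since `A` is convex and contains `B(x; ρ)`,
`A^ε = A + B(0; ε) ⊆ A + (ε/ρ) • (A - x) = (1 + ε/ρ) • A - (ε/ρ) • x`,
a translate of the dilate `(1 + ε/ρ) • A`. Monotonicity, translation invariance and homogeneity
of `T` then give the bound.
-/

open Metric Pointwise

theorem thickening_subset_vadd_smul_of_ball_subset {E : Type*} [NormedAddCommGroup E]
    [NormedSpace ℝ E] {A : Set E} (hA : Convex ℝ A) {x : E} {ρ ε : ℝ} (hρ : 0 < ρ)
    (hε : 0 < ε) (hball : ball x ρ ⊆ A) :
    thickening ε A ⊆ -((ε / ρ) • x) +ᵥ (1 + ε / ρ) • A := by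
  intro y hy
  obtain ⟨a, ha, hya⟩ := mem_thickening_iff.1 hy
  have hc : 0 < 1 + ε / ρ := by positivity
  have hb : x + (ρ / ε) • (y - a) ∈ A := by
    apply hball
    rw [mem_ball, dist_eq_norm, add_sub_cancel_left, norm_smul, Real.norm_of_nonneg (by positivity),
      ← dist_eq_norm]
    calc ρ / ε * dist y a < ρ / ε * ε := by gcongr
      _ = ρ := div_mul_cancel₀ ρ hε.ne'
  -- `y = (1 + ε/ρ) • z - (ε/ρ) • x` for this convex combination `z` of `a` and the ball point.
  have hz := hA ha hb (a := (1 + ε / ρ)⁻¹) (b := (ε / ρ) / (1 + ε / ρ)) (by positivity)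
    (by positivity) (by field_simp)
  rw [Set.mem_vadd_set_iff_neg_vadd_mem, Set.mem_smul_set_iff_inv_smul_mem₀ hc.ne']
  convert hz using 1
  simp only [neg_neg, vadd_eq_add]
  match_scalars <;> field_simp
  ring

theorem setFunction_vadd_smul {E : Type*} [NormedAddCommGroup E] [NormedSpace ℝ E] {τ : ℝ}
    {T : Set E → ℝ}
    (hiso : ∀ (f : E ≃ᵢ E) (Ω : Set E), IsOpen Ω → Convex ℝ Ω → T (f '' Ω) = T Ω)
    (hhom : ∀ (α : ℝ), 0 < α → ∀ Ω : Set E, IsOpen Ω → Convex ℝ Ω → T (α • Ω) = α ^ τ * T Ω)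
    {Ω : Set E} (hΩo : IsOpen Ω) (hΩc : Convex ℝ Ω) (v : E) {c : ℝ} (hc : 0 < c) :
    T (v +ᵥ c • Ω) = c ^ τ * T Ω := by
  rw [← hhom c hc Ω hΩo hΩc, ← Set.image_vadd, ← hiso (IsometryEquiv.constVAdd (X := E) v) _
    (hΩo.smul₀ hc.ne') (hΩc.smul c)]
  rfl

theorem T_eps_neighbourhood_le_general (m : ℕ) (τ : ℝ)
    (T : Set (EuclideanSpace ℝ (Fin m)) → ℝ)
    (hiso : ∀ (f : EuclideanSpace ℝ (Fin m) ≃ᵢ EuclideanSpace ℝ (Fin m))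
      (Ω : Set (EuclideanSpace ℝ (Fin m))), IsOpen Ω → Convex ℝ Ω → T (f '' Ω) = T Ω)
    (hmono : ∀ Ω₁ Ω₂ : Set (EuclideanSpace ℝ (Fin m)), IsOpen Ω₁ → Convex ℝ Ω₁ →
      IsOpen Ω₂ → Convex ℝ Ω₂ → Ω₁ ⊆ Ω₂ → T Ω₁ ≤ T Ω₂)
    (hhom : ∀ (α : ℝ), 0 < α → ∀ Ω : Set (EuclideanSpace ℝ (Fin m)), IsOpen Ω →
      Convex ℝ Ω → T (α • Ω) = α ^ τ * T Ω)
    (A : Set (EuclideanSpace ℝ (Fin m)))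
    (hAopen : IsOpen A) (hAconv : Convex ℝ A)
    (x : EuclideanSpace ℝ (Fin m)) (ρ : ℝ) (hρ : 0 < ρ) (hball : ball x ρ ⊆ A)
    (ε : ℝ) (hε : 0 < ε) :
    T {y : EuclideanSpace ℝ (Fin m) | infDist y A < ε} ≤ (1 + ε / ρ) ^ τ * T A := by
  have hc : 0 < 1 + ε / ρ := by positivity
  have hS : {y | infDist y A < ε} = thickening ε A := by
    ext y
    exact (mem_thickening_iff_infDist_lt ((nonempty_ball.2 hρ).mono hball)).symm
  rw [hS, ← setFunction_vadd_smul hiso hhom hAopen hAconv (-((ε / ρ) • x)) hc]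
  exact hmono _ _ isOpen_thickening (hAconv.thickening ε) ((hAopen.smul₀ hc.ne').vadd _)
    ((hAconv.smul _).vadd _) (thickening_subset_vadd_smul_of_ball_subset hAconv hρ hε hball)

/-- for a set function `T` on the open convex subsets of `ℝ^m` which is
isometry invariant, monotone, non-negative and homogeneous of degree `τ > 0`, a nonempty
open bounded convex set `A` containing a ball `B(x; ρ)`, and `ε > 0`, the open
`ε`-neighbourhood `A^ε` satisfies `T(A^ε) ≤ (1 + ε/ρ)^τ T(A)`. -/
theorem T_eps_neighbourhood_le (m : ℕ) (hm : 2 ≤ m) (τ : ℝ) (hτ : 0 < τ)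
    (T : Set (EuclideanSpace ℝ (Fin m)) → ℝ)
    (hiso : ∀ (f : EuclideanSpace ℝ (Fin m) ≃ᵢ EuclideanSpace ℝ (Fin m))
      (Ω : Set (EuclideanSpace ℝ (Fin m))), IsOpen Ω → Convex ℝ Ω → T (f '' Ω) = T Ω)
    (hmono : ∀ Ω₁ Ω₂ : Set (EuclideanSpace ℝ (Fin m)), IsOpen Ω₁ → Convex ℝ Ω₁ →
      IsOpen Ω₂ → Convex ℝ Ω₂ → Ω₁ ⊆ Ω₂ → T Ω₁ ≤ T Ω₂)
    (hnonneg : ∀ Ω : Set (EuclideanSpace ℝ (Fin m)), IsOpen Ω → Convex ℝ Ω → 0 ≤ T Ω)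
    (hhom : ∀ (α : ℝ), 0 < α → ∀ Ω : Set (EuclideanSpace ℝ (Fin m)), IsOpen Ω →
      Convex ℝ Ω → T (α • Ω) = α ^ τ * T Ω)
    (A : Set (EuclideanSpace ℝ (Fin m)))
    (hAne : A.Nonempty) (hAbd : Bornology.IsBounded A)
    (hAopen : IsOpen A) (hAconv : Convex ℝ A)
    (x : EuclideanSpace ℝ (Fin m)) (ρ : ℝ) (hρ : 0 < ρ) (hball : ball x ρ ⊆ A)
    (ε : ℝ) (hε : 0 < ε) :
    T {y : EuclideanSpace ℝ (Fin m) | infDist y A < ε} ≤ (1 + ε / ρ) ^ τ * T A :=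
  T_eps_neighbourhood_le_general m τ T hiso hmono hhom A hAopen hAconv x ρ hρ hball ε hε
end

section
/- Let m ≥ 1 and let D > 0, V > 0, a > 0, b > 0, K₁ > 0, K₂ > 0, t₁ > 0, t₂ > 0, τ₁ > 0, τ₂ > 0 be real numbers. If D ≤ K₁·a^{t₁}·V^{(1 − t₁τ₁)/m} and D ≤ K₂·b^{t₂}·V^{(1 − t₂τ₂)/m}, then D ≤ max{K₁,K₂}·(a·b)^{t}·V^{(1 − t(τ₁+τ₂))/m}, where t = t₁t₂/(t₁ + t₂). -/
/-!
Raise the two bounds to the powers `θ₁ = t₂/(t₁+t₂)` and `θ₂ = t₁/(t₁+t₂)`, which sum to `1`, and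
multiply them. The weights are chosen so that `t₁θ₁ = t₂θ₂ = t`, so `a` and `b` appear with the same
exponent `t`, while the powers of `V` combine to `V^{(1 - t(τ₁+τ₂))/m}`; finally the weighted
geometric mean `K₁^{θ₁} K₂^{θ₂}` is at most `max K₁ K₂`.
-/

namespace Real

theorem le_rpow_mul_rpow_of_le_of_le {x y z p q : ℝ} (hx : 0 ≤ x) (hy : x ≤ y) (hz : x ≤ z)
    (hp : 0 ≤ p) (hq : 0 ≤ q) (hpq : p + q = 1) : x ≤ y ^ p * z ^ q :=
  calc x = x ^ p * x ^ q := by rw [← rpow_add' hx (by simp [hpq]), hpq, rpow_one]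
    _ ≤ y ^ p * z ^ q := by
      gcongr
      exact rpow_nonneg (hx.trans hy) p

theorem rpow_mul_rpow_le_max {x y p q : ℝ} (hx : 0 ≤ x) (hy : 0 ≤ y)
    (hp : 0 ≤ p) (hq : 0 ≤ q) (hpq : p + q = 1) : x ^ p * y ^ q ≤ max x y :=
  calc x ^ p * y ^ q ≤ p * x + q * y := geom_mean_le_arith_mean2_weighted hp hq hx hy hpq
    _ ≤ p * max x y + q * max x y := by gcongr <;> simp
    _ = max x y := by rw [← add_mul, hpq, one_mul]

theorem mul_rpow_mul_rpow_rpow {K x V : ℝ} (hK : 0 ≤ K) (hx : 0 ≤ x) (hV : 0 ≤ V) (s e θ : ℝ) :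
    (K * x ^ s * V ^ e) ^ θ = K ^ θ * x ^ (s * θ) * V ^ (e * θ) := by
  rw [mul_rpow (by positivity) (by positivity), mul_rpow hK (by positivity),
    rpow_mul hx, rpow_mul hV]

end Real

theorem product_constraint_diam_bound_general (m : ℕ)
    (D V a b K₁ K₂ t₁ t₂ τ₁ τ₂ : ℝ)
    (hD : 0 < D) (hV : 0 < V) (ha : 0 < a) (hb : 0 < b)
    (hK₁ : 0 < K₁) (hK₂ : 0 < K₂) (ht₁ : 0 < t₁) (ht₂ : 0 < t₂)
    (h₁ : D ≤ K₁ * a ^ t₁ * V ^ ((1 - t₁ * τ₁) / m))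
    (h₂ : D ≤ K₂ * b ^ t₂ * V ^ ((1 - t₂ * τ₂) / m)) :
    D ≤ max K₁ K₂ * (a * b) ^ (t₁ * t₂ / (t₁ + t₂)) *
      V ^ ((1 - (t₁ * t₂ / (t₁ + t₂)) * (τ₁ + τ₂)) / m) := by
  have hs : t₁ + t₂ ≠ 0 := by positivity
  have hθ : t₂ / (t₁ + t₂) + t₁ / (t₁ + t₂) = 1 := by field_simp; ring
  have key := Real.le_rpow_mul_rpow_of_le_of_le hD.le h₁ h₂ (by positivity) (by positivity) hθ
  rw [Real.mul_rpow_mul_rpow_rpow hK₁.le ha.le hV.le,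
    Real.mul_rpow_mul_rpow_rpow hK₂.le hb.le hV.le] at key
  have hexp_a : t₁ * (t₂ / (t₁ + t₂)) = t₁ * t₂ / (t₁ + t₂) := by ring
  have hexp_b : t₂ * (t₁ / (t₁ + t₂)) = t₁ * t₂ / (t₁ + t₂) := by ring
  have hexp_V : (1 - t₁ * τ₁) / m * (t₂ / (t₁ + t₂)) + (1 - t₂ * τ₂) / m * (t₁ / (t₁ + t₂)) =
      (1 - (t₁ * t₂ / (t₁ + t₂)) * (τ₁ + τ₂)) / m := by
    field_simp
    ring
  calc D ≤ _ := key
    _ = K₁ ^ (t₂ / (t₁ + t₂)) * K₂ ^ (t₁ / (t₁ + t₂)) * (a * b) ^ (t₁ * t₂ / (t₁ + t₂)) *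
          V ^ ((1 - (t₁ * t₂ / (t₁ + t₂)) * (τ₁ + τ₂)) / m) := by
      rw [hexp_a, hexp_b, ← hexp_V, Real.rpow_add hV, Real.mul_rpow ha.le hb.le]
      ring
    _ ≤ _ := by
      gcongr
      exact Real.rpow_mul_rpow_le_max hK₁.le hK₂.le (by positivity) (by positivity) hθ

/-- if `D ≤ K₁ a^{t₁} V^{(1 - t₁τ₁)/m}` and `D ≤ K₂ b^{t₂} V^{(1 - t₂τ₂)/m}`,
then `D ≤ max{K₁,K₂} (ab)^t V^{(1 - t(τ₁+τ₂))/m}` with `t = t₁t₂/(t₁+t₂)`. -/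
theorem product_constraint_diam_bound (m : ℕ) (hm : 1 ≤ m)
    (D V a b K₁ K₂ t₁ t₂ τ₁ τ₂ : ℝ)
    (hD : 0 < D) (hV : 0 < V) (ha : 0 < a) (hb : 0 < b)
    (hK₁ : 0 < K₁) (hK₂ : 0 < K₂) (ht₁ : 0 < t₁) (ht₂ : 0 < t₂)
    (hτ₁ : 0 < τ₁) (hτ₂ : 0 < τ₂)
    (h₁ : D ≤ K₁ * a ^ t₁ * V ^ ((1 - t₁ * τ₁) / m))
    (h₂ : D ≤ K₂ * b ^ t₂ * V ^ ((1 - t₂ * τ₂) / m)) :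
    D ≤ max K₁ K₂ * (a * b) ^ (t₁ * t₂ / (t₁ + t₂)) *
      V ^ ((1 - (t₁ * t₂ / (t₁ + t₂)) * (τ₁ + τ₂)) / m) :=
  product_constraint_diam_bound_general m D V a b K₁ K₂ t₁ t₂ τ₁ τ₂ hD hV ha hb hK₁ hK₂ ht₁ ht₂ h₁
    h₂
end
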